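/- With a_n = (3n)!/(n!)³ and b_n = ∑_{k=0}^{n-1}(3/(3k+1) + 3/(3k+2) - 2/(k+1)), the function π₂(t) = 3·log(t)·∑_{n≥0} a_n t^{3n} + ∑_{n≥1} a_n b_n t^{3n} satisfies δ²π₂ - 27t³(δ+1)(δ+2)π₂ = 0 for 0 < t < 1/3, where δ = t·d/dt. -/

import Mathlib

open Real Finset

/-- The Euler operator `δ = t·d/dt` on real functions. -/
noncomputable def eulerOpR (g : ℝ → ℝ) (t : ℝ) : ℝ := t * deriv g t

/-- `a_n = (3n)!/(n!)³`. -/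
noncomputable def aCoef (n : ℕ) : ℝ := ((3 * n).factorial : ℝ) / ((n.factorial : ℝ)) ^ 3

/-- `b_n = ∑_{k=0}^{n-1} (3/(3k+1) + 3/(3k+2) - 2/(k+1))`. -/
noncomputable def bCoef (n : ℕ) : ℝ :=
    ∑ k ∈ Finset.range n, (3 / (3 * (k : ℝ) + 1) + 3 / (3 * (k : ℝ) + 2) - 2 / ((k : ℝ) + 1))

/-- `π₂(t) = 3 log(t) ∑_{n≥0} a_n t^{3n} + ∑_{n≥1} a_n b_n t^{3n}`. -/
noncomputable def pi₂ (t : ℝ) : ℝ :=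
    3 * Real.log t * (∑' n : ℕ, aCoef n * t ^ (3 * n)) +
      ∑' n : ℕ, aCoef (n + 1) * bCoef (n + 1) * t ^ (3 * (n + 1))

/-!
Write `π₂ = log t · F c + F d` with lacunary series `F c t = ∑ c n t³ⁿ`, `c = 3a`, `d = ab`.
Termwise, `δ (log t · F c + F d) = log t · F (3n c) + F (c + 3n d)`, so `δ²π₂ - 27t³(δ+1)(δ+2)π₂`
is again of this shape, and it vanishes once its coefficients do. Those are two recurrences:
the one for `log t` is `(n+1)² a_{n+1} = 3(3n+1)(3n+2) a_n`, and the other follows from it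
together with the formula for `b_{n+1} - b_n`. Termwise differentiation on `(0, 1/3)` is
justified by `a_n ≤ 27ⁿ` and `0 ≤ b_n ≤ 3n`.
-/

open Filter Topology

def absConvCoeffs (R : ℝ) : Submodule ℝ (ℕ → ℝ) where
  carrier := {c | ∀ r, 0 ≤ r → r < R → Summable fun n => |c n| * r ^ (3 * n)}
  zero_mem' _ _ _ := by simp
  add_mem' {c d} hc hd r hr0 hrR :=
    ((hc r hr0 hrR).add (hd r hr0 hrR)).of_nonneg_of_le (fun _ => by positivity)
      fun n => by rw [Pi.add_apply, ← add_mul]; gcongr; exact abs_add_le _ _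
  smul_mem' k c hc r hr0 hrR :=
    ((hc r hr0 hrR).mul_left |k|).congr fun n => by simp [abs_mul, mul_assoc]

namespace absConvCoeffs

variable {R : ℝ} {c d : ℕ → ℝ}

theorem of_abs_le (hc : c ∈ absConvCoeffs R) (h : ∀ n, |d n| ≤ |c n|) :
    d ∈ absConvCoeffs R := fun r hr0 hrR =>
  (hc r hr0 hrR).of_nonneg_of_le (fun _ => by positivity) fun n =>
    mul_le_mul_of_nonneg_right (h n) (by positivity)

theorem summable (hc : c ∈ absConvCoeffs R) {y : ℝ} (hy : |y| < R) :
    Summable fun n => c n * y ^ (3 * n) :=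
  .of_norm <| (hc |y| (abs_nonneg y) hy).congr fun n => by simp

end absConvCoeffs

/-- The Euler operator `y d/dy` multiplies `y ^ (3 n)` by `3 n`. -/
def eulerCoeff (c : ℕ → ℝ) (n : ℕ) : ℝ := 3 * n * c n

theorem eulerCoeff_mem {R : ℝ} {c : ℕ → ℝ} (hc : c ∈ absConvCoeffs R) :
    eulerCoeff c ∈ absConvCoeffs R := by
  intro r hr0 hrR
  obtain ⟨r', hrr', hr'R⟩ := exists_between hrR
  have hr' : 0 < r' := hr0.trans_lt hrr'
  have hρ1 : (r / r') ^ 3 < 1 :=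
    pow_lt_one₀ (by positivity) ((div_lt_one hr').2 hrr') three_ne_zero
  -- `n r³ⁿ ≤ r'³ⁿ` eventually, because `n (r / r')³ⁿ → 0`
  have hbound : ∀ᶠ n : ℕ in atTop, (n : ℝ) * ((r / r') ^ 3) ^ n ≤ 1 :=
    (tendsto_self_mul_const_pow_of_lt_one (by positivity) hρ1).eventually
      (gt_mem_nhds one_pos) |>.mono fun _ h => h.le
  refine ((hc r' hr'.le hr'R).mul_left 3).of_norm_bounded_eventually_nat ?_
  filter_upwards [hbound] with n hn
  have hsplit : |eulerCoeff c n| * r ^ (3 * n)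
      = 3 * ((n : ℝ) * ((r / r') ^ 3) ^ n) * (|c n| * r' ^ (3 * n)) := by
    have hr : r ^ (3 * n) = ((r / r') ^ 3) ^ n * r' ^ (3 * n) := by
      rw [← pow_mul, ← mul_pow, div_mul_cancel₀ _ hr'.ne']
    rw [hr, eulerCoeff, abs_mul, abs_of_nonneg (by positivity : (0 : ℝ) ≤ 3 * n)]
    ring
  rw [Real.norm_of_nonneg (by positivity), hsplit]
  nlinarith [mul_nonneg (abs_nonneg (c n)) (pow_nonneg hr'.le (3 * n))]

noncomputable def cubeSeries (c : ℕ → ℝ) (y : ℝ) : ℝ := ∑' n, c n * y ^ (3 * n)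

theorem cubeSeries_add {R : ℝ} {c d : ℕ → ℝ} (hc : c ∈ absConvCoeffs R)
    (hd : d ∈ absConvCoeffs R) {y : ℝ} (hy : |y| < R) :
    cubeSeries (c + d) y = cubeSeries c y + cubeSeries d y := by
  simp only [cubeSeries, Pi.add_apply, add_mul]
  exact (absConvCoeffs.summable hc hy).tsum_add (absConvCoeffs.summable hd hy)

theorem cubeSeries_smul (k : ℝ) (c : ℕ → ℝ) (y : ℝ) :
    cubeSeries (k • c) y = k * cubeSeries c y := by
  simp only [cubeSeries, Pi.smul_apply, smul_eq_mul, mul_assoc, tsum_mul_left]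

theorem cubeSeries_eq_of_succ {c c' : ℕ → ℝ} {K : ℝ} (h0 : c 0 = 0)
    (hsucc : ∀ n, c (n + 1) = K * c' n) (y : ℝ) :
    cubeSeries c y = K * y ^ 3 * cubeSeries c' y := by
  have hsupp : (Function.support fun n => c n * y ^ (3 * n)) ⊆ Set.range Nat.succ := by
    rintro (_ | n) hn
    · simp [h0] at hn
    · exact ⟨n, rfl⟩
  rw [cubeSeries, ← Nat.succ_injective.tsum_eq hsupp, cubeSeries, ← tsum_mul_left]
  congr 1 with n
  rw [Nat.succ_eq_add_one, hsucc, mul_add, pow_add]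
  ring

theorem hasDerivAt_mul_pow {y : ℝ} (hy : y ≠ 0) (a : ℝ) (m : ℕ) :
    HasDerivAt (fun z => a * z ^ m) (m * a * y ^ m / y) y := by
  refine ((hasDerivAt_pow m y).const_mul a).congr_deriv ?_
  rcases m with _ | m
  · simp
  · rw [pow_succ]
    field_simp
    simp

theorem hasDerivAt_cubeSeries {R : ℝ} {c : ℕ → ℝ} (hc : c ∈ absConvCoeffs R) {y : ℝ}
    (hy0 : 0 < y) (hyR : y < R) :
    HasDerivAt (cubeSeries c) (cubeSeries (eulerCoeff c) y / y) y := by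
  obtain ⟨r, hyr, hrR⟩ := exists_between hyR
  have hyI : y ∈ Set.Ioo (y / 2) r := ⟨by linarith, hyr⟩
  have hbound : ∀ n, ∀ z ∈ Set.Ioo (y / 2) r,
      ‖eulerCoeff c n * z ^ (3 * n) / z‖ ≤ 2 / y * (|eulerCoeff c n| * r ^ (3 * n)) := by
    intro n z ⟨hyz, hzr⟩
    have hz0 : 0 < z := by linarith
    have hr0 : 0 ≤ r := by linarith
    have hzy : 1 ≤ 2 / y * z := by rw [div_mul_eq_mul_div, le_div_iff₀ hy0]; linarith
    rw [norm_div, norm_mul, norm_pow, Real.norm_eq_abs, Real.norm_eq_abs, abs_of_pos hz0,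
      div_le_iff₀ hz0]
    calc |eulerCoeff c n| * z ^ (3 * n) ≤ |eulerCoeff c n| * r ^ (3 * n) * 1 := by
          rw [mul_one]; gcongr
      _ ≤ |eulerCoeff c n| * r ^ (3 * n) * (2 / y * z) := by gcongr
      _ = 2 / y * (|eulerCoeff c n| * r ^ (3 * n)) * z := by ring
  have hderiv := hasDerivAt_tsum_of_isPreconnected
    ((eulerCoeff_mem hc r (by linarith) hrR).mul_left (2 / y)) isOpen_Ioo
    (convex_Ioo (y / 2) r).isPreconnected
    (g := fun n z => c n * z ^ (3 * n)) (g' := fun n z => eulerCoeff c n * z ^ (3 * n) / z)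
    (fun n z hz => by
      refine (hasDerivAt_mul_pow (by linarith [hz.1] : z ≠ 0) (c n) (3 * n)).congr_deriv ?_
      simp only [eulerCoeff]
      push_cast
      ring)
    hbound hyI (absConvCoeffs.summable hc (by rwa [abs_of_pos hy0])) hyI
  rw [cubeSeries, ← tsum_div_const]
  exact hderiv

noncomputable def logCubeSeries (c d : ℕ → ℝ) (y : ℝ) : ℝ :=
  Real.log y * cubeSeries c y + cubeSeries d y

section logCubeSeries

open Submodule

variable {R : ℝ} {c d : ℕ → ℝ}

theorem logCubeSeries_add {c' d' : ℕ → ℝ} (hc : c ∈ absConvCoeffs R) (hc' : c' ∈ absConvCoeffs R)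
    (hd : d ∈ absConvCoeffs R) (hd' : d' ∈ absConvCoeffs R) {y : ℝ} (hy : |y| < R) :
    logCubeSeries (c + c') (d + d') y = logCubeSeries c d y + logCubeSeries c' d' y := by
  simp only [logCubeSeries, cubeSeries_add hc hc' hy, cubeSeries_add hd hd' hy]
  ring

theorem logCubeSeries_smul (k : ℝ) (c d : ℕ → ℝ) (y : ℝ) :
    logCubeSeries (k • c) (k • d) y = k * logCubeSeries c d y := by
  simp only [logCubeSeries, cubeSeries_smul]
  ring

theorem logCubeSeries_eq_of_succ {c' d' : ℕ → ℝ} {K : ℝ} (hc0 : c 0 = 0) (hd0 : d 0 = 0)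
    (hc : ∀ n, c (n + 1) = K * c' n) (hd : ∀ n, d (n + 1) = K * d' n) (y : ℝ) :
    logCubeSeries c d y = K * y ^ 3 * logCubeSeries c' d' y := by
  simp only [logCubeSeries, cubeSeries_eq_of_succ hc0 hc, cubeSeries_eq_of_succ hd0 hd]
  ring

theorem hasDerivAt_logCubeSeries (hc : c ∈ absConvCoeffs R) (hd : d ∈ absConvCoeffs R) {y : ℝ}
    (hy0 : 0 < y) (hyR : y < R) :
    HasDerivAt (logCubeSeries c d) ((cubeSeries c y + Real.log y * cubeSeries (eulerCoeff c) y
      + cubeSeries (eulerCoeff d) y) / y) y := by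
  refine (((Real.hasDerivAt_log hy0.ne').mul (hasDerivAt_cubeSeries hc hy0 hyR)).add
    (hasDerivAt_cubeSeries hd hy0 hyR)).congr_deriv ?_
  field_simp

theorem eulerOpR_logCubeSeries (hc : c ∈ absConvCoeffs R) (hd : d ∈ absConvCoeffs R) {y : ℝ}
    (hy0 : 0 < y) (hyR : y < R) :
    eulerOpR (logCubeSeries c d) y = logCubeSeries (eulerCoeff c) (c + eulerCoeff d) y := by
  rw [eulerOpR, (hasDerivAt_logCubeSeries hc hd hy0 hyR).deriv, logCubeSeries,
    cubeSeries_add hc (eulerCoeff_mem hd) (by rwa [abs_of_pos hy0])]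
  field_simp
  ring

theorem eulerOpR_eulerOpR_logCubeSeries (hc : c ∈ absConvCoeffs R) (hd : d ∈ absConvCoeffs R)
    {y : ℝ} (hy0 : 0 < y) (hyR : y < R) :
    eulerOpR (eulerOpR (logCubeSeries c d)) y = logCubeSeries (eulerCoeff (eulerCoeff c))
      (eulerCoeff c + eulerCoeff (c + eulerCoeff d)) y := by
  have hev : eulerOpR (logCubeSeries c d) =ᶠ[𝓝 y]
      logCubeSeries (eulerCoeff c) (c + eulerCoeff d) :=
    eventually_of_mem (isOpen_Ioo.mem_nhds ⟨hy0, hyR⟩) fun z hz =>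
      eulerOpR_logCubeSeries hc hd hz.1 hz.2
  rw [eulerOpR, hev.deriv_eq, ← eulerOpR,
    eulerOpR_logCubeSeries (eulerCoeff_mem hc) (add_mem hc (eulerCoeff_mem hd)) hy0 hyR]

/-- The recurrences say that the coefficients of `log y · y³⁽ⁿ⁺¹⁾` and of `y³⁽ⁿ⁺¹⁾` in
`δ²f - K y³ (δ + 1)(δ + 2) f` vanish. -/
theorem eulerOpR_ode_of_recurrence {K : ℝ} (hc : c ∈ absConvCoeffs R) (hd : d ∈ absConvCoeffs R)
    (hc_rec : ∀ n : ℕ, 9 * ((n : ℝ) + 1) ^ 2 * c (n + 1) = K * (3 * n + 1) * (3 * n + 2) * c n)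
    (hd_rec : ∀ n : ℕ, 6 * ((n : ℝ) + 1) * c (n + 1) + 9 * ((n : ℝ) + 1) ^ 2 * d (n + 1)
      = K * ((3 * n + 1) * (3 * n + 2) * d n + (6 * n + 3) * c n))
    {y : ℝ} (hy0 : 0 < y) (hyR : y < R) :
    eulerOpR (eulerOpR (logCubeSeries c d)) y - K * y ^ 3 * (eulerOpR (eulerOpR
      (logCubeSeries c d)) y + 3 * eulerOpR (logCubeSeries c d) y + 2 * logCubeSeries c d y)
      = 0 := by
  set c₁ := eulerCoeff c
  set d₁ := c + eulerCoeff d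
  set c₂ := eulerCoeff c₁
  set d₂ := c₁ + eulerCoeff d₁
  have hy : |y| < R := by rwa [abs_of_pos hy0]
  have hc₁ : c₁ ∈ absConvCoeffs R := eulerCoeff_mem hc
  have hd₁ : d₁ ∈ absConvCoeffs R := add_mem hc (eulerCoeff_mem hd)
  have hc₂ : c₂ ∈ absConvCoeffs R := eulerCoeff_mem hc₁
  have hd₂ : d₂ ∈ absConvCoeffs R := add_mem hc₁ (eulerCoeff_mem hd₁)
  have key : logCubeSeries c₂ d₂ y = K * y ^ 3 *
      logCubeSeries (c₂ + (3 : ℝ) • c₁ + (2 : ℝ) • c) (d₂ + (3 : ℝ) • d₁ + (2 : ℝ) • d) y := by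
    refine logCubeSeries_eq_of_succ (by simp [c₂, eulerCoeff]) (by simp [d₂, c₁, eulerCoeff])
      (fun n => ?_) (fun n => ?_) y
    · simp only [c₂, c₁, eulerCoeff, Pi.add_apply, Pi.smul_apply]
      push_cast
      linear_combination hc_rec n
    · simp only [d₂, d₁, c₁, eulerCoeff, Pi.add_apply, Pi.smul_apply]
      push_cast
      linear_combination hd_rec n
  rw [eulerOpR_eulerOpR_logCubeSeries hc hd hy0 hyR, eulerOpR_logCubeSeries hc hd hy0 hyR,
    ← logCubeSeries_smul 3, ← logCubeSeries_smul 2,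
    ← logCubeSeries_add hc₂ (smul_mem _ 3 hc₁) hd₂ (smul_mem _ 3 hd₁) hy,
    ← logCubeSeries_add (add_mem hc₂ (smul_mem _ 3 hc₁)) (smul_mem _ 2 hc)
      (add_mem hd₂ (smul_mem _ 3 hd₁)) (smul_mem _ 2 hd) hy, key, sub_self]

end logCubeSeries

theorem aCoef_succ (n : ℕ) :
    ((n : ℝ) + 1) ^ 2 * aCoef (n + 1) = 3 * (3 * n + 1) * (3 * n + 2) * aCoef n := by
  have hfac : ((3 * (n + 1)).factorial : ℝ)
      = (3 * n + 3) * (3 * n + 2) * (3 * n + 1) * (3 * n).factorial := by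
    rw [show 3 * (n + 1) = 3 * n + 2 + 1 by ring, Nat.factorial_succ, Nat.factorial_succ,
      Nat.factorial_succ]
    push_cast
    ring
  rw [aCoef, aCoef, hfac, Nat.factorial_succ]
  push_cast
  field_simp

theorem aCoef_nonneg (n : ℕ) : 0 ≤ aCoef n := by
  unfold aCoef
  positivity

theorem aCoef_le (n : ℕ) : aCoef n ≤ 27 ^ n := by
  induction n with
  | zero => simp [aCoef]
  | succ n ih =>
    have hn : (0 : ℝ) < ((n : ℝ) + 1) ^ 2 := by positivity
    rw [← mul_le_mul_iff_right₀ hn]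
    calc ((n : ℝ) + 1) ^ 2 * aCoef (n + 1) = 3 * (3 * n + 1) * (3 * n + 2) * aCoef n :=
          aCoef_succ n
      _ ≤ 27 * ((n : ℝ) + 1) ^ 2 * 27 ^ n :=
          mul_le_mul (by nlinarith) ih (aCoef_nonneg n) (by positivity)
      _ = ((n : ℝ) + 1) ^ 2 * 27 ^ (n + 1) := by ring

theorem aCoef_mem : aCoef ∈ absConvCoeffs (1 / 3) := by
  intro r hr0 hr
  have hq : 27 * r ^ 3 < 1 := by nlinarith [pow_lt_pow_left₀ hr hr0 three_ne_zero]
  refine (summable_geometric_of_lt_one (by positivity) hq).of_nonneg_of_le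
    (fun _ => by positivity) fun n => ?_
  rw [abs_of_nonneg (aCoef_nonneg n), mul_pow, pow_mul]
  gcongr
  exact aCoef_le n

theorem bCoef_succ (n : ℕ) : bCoef (n + 1)
    = bCoef n + (3 / (3 * (n : ℝ) + 1) + 3 / (3 * (n : ℝ) + 2) - 2 / ((n : ℝ) + 1)) :=
  Finset.sum_range_succ _ _

theorem bCoef_summand_mem_Icc (k : ℕ) :
    3 / (3 * (k : ℝ) + 1) + 3 / (3 * (k : ℝ) + 2) - 2 / ((k : ℝ) + 1) ∈ Set.Icc (0 : ℝ) 3 := by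
  have h1 : 1 / ((k : ℝ) + 1) ≤ 3 / (3 * (k : ℝ) + 1) := by
    rw [div_le_div_iff₀ (by positivity) (by positivity)]; linarith
  have h2 : 1 / ((k : ℝ) + 1) ≤ 3 / (3 * (k : ℝ) + 2) := by
    rw [div_le_div_iff₀ (by positivity) (by positivity)]; linarith
  have h3 : 3 / (3 * (k : ℝ) + 2) ≤ 2 / ((k : ℝ) + 1) := by
    rw [div_le_div_iff₀ (by positivity) (by positivity)]; linarith
  have h4 : 3 / (3 * (k : ℝ) + 1) ≤ 3 := by
    rw [div_le_iff₀ (by positivity)]; nlinarith [k.cast_nonneg (α := ℝ)]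
  constructor <;> linarith [show 2 / ((k : ℝ) + 1) = 1 / (k + 1) + 1 / (k + 1) by ring]

theorem bCoef_mem_Icc (n : ℕ) : bCoef n ∈ Set.Icc 0 (3 * (n : ℝ)) := by
  constructor
  · exact Finset.sum_nonneg fun k _ => (bCoef_summand_mem_Icc k).1
  · have := Finset.sum_le_card_nsmul (Finset.range n) _ 3 fun k _ => (bCoef_summand_mem_Icc k).2
    rwa [Finset.card_range, nsmul_eq_mul, mul_comm] at this

theorem aCoef_mul_bCoef_mem : aCoef * bCoef ∈ absConvCoeffs (1 / 3) :=
  absConvCoeffs.of_abs_le (eulerCoeff_mem aCoef_mem) fun n => by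
    have hb := bCoef_mem_Icc n
    rw [Pi.mul_apply, eulerCoeff, abs_of_nonneg (mul_nonneg (aCoef_nonneg n) hb.1),
      abs_of_nonneg (by positivity [aCoef_nonneg n])]
    nlinarith [aCoef_nonneg n, hb.2]

theorem aCoef_mul_bCoef_succ (n : ℕ) :
    6 * ((n : ℝ) + 1) * (3 * aCoef (n + 1))
        + 9 * ((n : ℝ) + 1) ^ 2 * (aCoef (n + 1) * bCoef (n + 1))
      = 27 * ((3 * n + 1) * (3 * n + 2) * (aCoef n * bCoef n) + (6 * n + 3) * (3 * aCoef n)) := by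
  have ha : aCoef (n + 1) = 3 * (3 * n + 1) * (3 * n + 2) * aCoef n / ((n : ℝ) + 1) ^ 2 := by
    rw [eq_div_iff (by positivity), mul_comm]
    exact aCoef_succ n
  rw [ha, bCoef_succ]
  field_simp
  ring

theorem pi₂_eq_logCubeSeries : pi₂ = logCubeSeries ((3 : ℝ) • aCoef) (aCoef * bCoef) := by
  ext t
  have hsupp : (Function.support fun n => (aCoef * bCoef) n * t ^ (3 * n)) ⊆
      Set.range Nat.succ := by
    rintro (_ | n) hn
    · simp [bCoef] at hn
    · exact ⟨n, rfl⟩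
  rw [logCubeSeries, cubeSeries_smul, cubeSeries, cubeSeries, ← Nat.succ_injective.tsum_eq hsupp,
    pi₂]
  simp only [Pi.mul_apply, Nat.succ_eq_add_one]
  ring

/-- `δ²π₂ - 27 t³ (δ+1)(δ+2) π₂ = 0` for `0 < t < 1/3`. -/
theorem stmt_14 (t : ℝ) (h0 : 0 < t) (h1 : t < 1 / 3) :
    eulerOpR (eulerOpR pi₂) t -
      27 * t ^ 3 *
        (eulerOpR (eulerOpR pi₂) t + 3 * eulerOpR pi₂ t + 2 * pi₂ t) = 0 := by
  rw [pi₂_eq_logCubeSeries]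
  refine eulerOpR_ode_of_recurrence (Submodule.smul_mem _ 3 aCoef_mem) aCoef_mul_bCoef_mem
    (fun n => ?_) aCoef_mul_bCoef_succ h0 h1
  simp only [Pi.smul_apply, smul_eq_mul]
  linear_combination 27 * aCoef_succ n
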